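/- Deterministic transport non-uniqueness: for d=1, b(x) = 2·sign(x)·√|x|, and any constant C, the function u(t,x) defined by u(t,x) = u₀(ψ_t^{−1}(x)) for |x| > t² (where ψ is the flow on the region where it is unique) and u(t,x) = C for |x| < t² is a weak L∞-solution of ∂ₜu + b∂ₓu = 0 with initial datum u₀; hence weak L∞-solutions are not unique. In particular, the constant-in-time-and-space functions u ≡ C₁ and the piecewise function equal to C₂ inside the parabola {|x|<t²} and C₁ outside both solve the PDE with u₀ ≡ C₁, when C₂ ≠ C₁, demonstrating at least two distinct weak solutions with the same initial data. -/

import Mathlib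

open MeasureTheory Set

/-- `u` is a weak `L∞`-solution of `∂ₜu + b ∂ₓu = 0` on `[0,T] × ℝ` with initial datum
`u₀`, where `db` is the (locally integrable) derivative of `b`. -/
def IsWeakTransportSol (T : ℝ) (b db : ℝ → ℝ) (u : ℝ → ℝ → ℝ) (u₀ : ℝ → ℝ) : Prop :=
  (∃ M : ℝ, ∀ t x, |u t x| ≤ M) ∧
  ∀ θ : ℝ → ℝ, ContDiff ℝ (⊤ : ℕ∞) θ → HasCompactSupport θ →
    ∀ t ∈ Set.Icc (0:ℝ) T,
      ∫ x, u t x * θ x =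
        (∫ x, u₀ x * θ x) +
          ∫ s in (0:ℝ)..t, ∫ x, u s x * (db x * θ x + b x * deriv θ x)

private lemma dbInt (a c : ℝ) :
    IntervalIntegrable (fun x : ℝ => if x = 0 then 0 else 1 / Real.sqrt |x|) volume a c := by
  have he : (fun x : ℝ => if x = 0 then 0 else 1 / Real.sqrt |x|)
      = fun x => |x| ^ (-(1/2) : ℝ) := by
    funext x
    by_cases h : x = 0
    · rw [if_pos h, h, abs_zero, Real.zero_rpow (by norm_num)]
    · rw [if_neg h, Real.rpow_neg (abs_nonneg x), ← Real.sqrt_eq_rpow, one_div]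
  rw [he]
  have H : ∀ d : ℝ, IntervalIntegrable (fun x : ℝ => |x| ^ (-(1/2) : ℝ)) volume 0 d := by
    intro d
    rcases le_or_gt 0 d with hd | hd
    · rw [intervalIntegrable_iff_integrableOn_Ioc_of_le hd]
      refine IntegrableOn.congr_fun (f := fun x : ℝ => x ^ (-(1/2) : ℝ))
        ((intervalIntegrable_iff_integrableOn_Ioc_of_le hd).1
          (intervalIntegral.intervalIntegrable_rpow' (by norm_num)))
        (fun x hx => ?_) measurableSet_Ioc
      rw [abs_of_pos hx.1]
    · refine IntervalIntegrable.symm ?_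
      rw [intervalIntegrable_iff_integrableOn_Ioc_of_le hd.le]
      refine IntegrableOn.congr_fun (f := fun x : ℝ => (-x) ^ (-(1/2) : ℝ))
        ((intervalIntegrable_iff_integrableOn_Ioc_of_le hd.le).1 ?_)
        (fun x hx => ?_) measurableSet_Ioc
      · have h2 := (IntervalIntegrable.iff_comp_neg (h := enorm_ne_top)).1
          (intervalIntegral.intervalIntegrable_rpow' (a := -d) (b := 0)
            (by norm_num : (-1:ℝ) < -(1/2)))
        simpa using h2
      · rcases eq_or_lt_of_le hx.2 with h | h
        · simp [h]
        · rw [abs_of_neg h]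
  exact (H a).symm.trans (H c)

private lemma bEq : (fun x : ℝ => 2 * Real.sign x * Real.sqrt |x|)
    = fun x => 2 * (Real.sqrt x - Real.sqrt (-x)) := by
  funext x
  rcases lt_trichotomy x 0 with h | h | h
  · rw [Real.sign_of_neg h, abs_of_neg h, Real.sqrt_eq_zero_of_nonpos h.le]; ring
  · simp [h]
  · rw [Real.sign_of_pos h, abs_of_pos h,
      Real.sqrt_eq_zero_of_nonpos (neg_nonpos.2 h.le)]; ring

private lemma bDeriv {x : ℝ} (hx : x ≠ 0) :
    HasDerivAt (fun x : ℝ => 2 * Real.sign x * Real.sqrt |x|)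
      (if x = 0 then 0 else 1 / Real.sqrt |x|) x := by
  rw [bEq]
  have h1 : HasDerivAt (fun y : ℝ => Real.sqrt y) (1 / (2 * Real.sqrt x)) x :=
    Real.hasDerivAt_sqrt hx
  have h2 : HasDerivAt (fun y : ℝ => Real.sqrt (-y)) (1 / (2 * Real.sqrt (-x)) * (-1)) x :=
    (Real.hasDerivAt_sqrt (neg_ne_zero.2 hx)).comp x (hasDerivAt_neg x)
  have h3 := (h1.sub h2).const_mul (2 : ℝ)
  refine h3.congr_deriv (Eq.symm ?_)
  rw [if_neg hx]
  rcases lt_or_gt_of_ne hx with h | h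
  · rw [abs_of_neg h, Real.sqrt_eq_zero_of_nonpos h.le]
    have hp : 0 < Real.sqrt (-x) := Real.sqrt_pos.2 (by linarith)
    field_simp
    simp
  · rw [abs_of_pos h, Real.sqrt_eq_zero_of_nonpos (neg_nonpos.2 h.le)]
    have hp : 0 < Real.sqrt x := Real.sqrt_pos.2 h
    field_simp
    simp

private lemma intMul (c : ℝ) (h : ℝ → ℝ) : ∫ x, c * h x = c * ∫ x, h x :=
  MeasureTheory.integral_const_mul c h

private lemma intIntMul (c a b : ℝ) (h : ℝ → ℝ) :
    (∫ x in a..b, c * h x) = c * ∫ x in a..b, h x :=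
  intervalIntegral.integral_const_mul c h

private lemma key (C₁ C₂ : ℝ) (θ : ℝ → ℝ) (hθ : ContDiff ℝ (⊤ : ℕ∞) θ) (hθc : HasCompactSupport θ)
    {t : ℝ} (ht : 0 ≤ t) :
    ∫ x, (if |x| < t ^ 2 then C₂ else C₁) * θ x =
      (∫ x, C₁ * θ x) +
        ∫ s in (0:ℝ)..t, ∫ x, (if |x| < s ^ 2 then C₂ else C₁) *
          ((if x = 0 then 0 else 1 / Real.sqrt (abs x)) * θ x +
            (2 * Real.sign x * Real.sqrt (abs x)) * deriv θ x) := by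
  set b : ℝ → ℝ := fun x => 2 * Real.sign x * Real.sqrt |x| with hb
  set db : ℝ → ℝ := fun x => if x = 0 then 0 else 1 / Real.sqrt |x| with hdb
  set f : ℝ → ℝ := fun x => db x * θ x + b x * deriv θ x with hf
  set g : ℝ → ℝ := fun x => b x * θ x with hg
  have hθcont : Continuous θ := hθ.continuous
  have hθ' : Continuous (deriv θ) := hθ.continuous_deriv (by simp)
  have hbcont : Continuous b := by rw [hb, bEq]; continuity
  have hgcont : Continuous g := hbcont.mul hθcont
  have hfint : ∀ a c : ℝ, IntervalIntegrable f volume a c := fun a c =>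
    ((dbInt a c).mul_continuousOn hθcont.continuousOn).add
      ((hbcont.mul hθ').intervalIntegrable a c)
  have hgderiv : ∀ x : ℝ, x ≠ 0 → HasDerivAt g (f x) x := fun x hx =>
    (bDeriv hx).mul ((hθ.differentiable (by simp) x).hasDerivAt)
  have hftc : ∀ a c : ℝ, a ≤ 0 → 0 ≤ c → ∫ x in a..c, f x = g c - g a := by
    intro a c ha hc
    rw [← intervalIntegral.integral_add_adjacent_intervals (hfint a 0) (hfint 0 c)]
    have h1 : ∫ x in a..(0:ℝ), f x = g 0 - g a :=
      intervalIntegral.integral_eq_sub_of_hasDeriv_right_of_le ha hgcont.continuousOn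
        (fun x hx => (hgderiv x hx.2.ne).hasDerivWithinAt) (hfint a 0)
    have h2 : ∫ x in (0:ℝ)..c, f x = g c - g 0 :=
      intervalIntegral.integral_eq_sub_of_hasDeriv_right_of_le hc hgcont.continuousOn
        (fun x hx => (hgderiv x hx.1.ne').hasDerivWithinAt) (hfint 0 c)
    rw [h1, h2]; ring
  obtain ⟨r, hr⟩ := hθc.isBounded.subset_closedBall 0
  set m : ℝ := max r 0 with hm
  set R : ℝ := m + 1 with hRdef
  have hR0 : (0:ℝ) ≤ R := by positivity
  have hsupp : tsupport θ ⊆ Icc (-m) m := by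
    refine hr.trans ?_
    rw [Real.closedBall_eq_Icc, zero_sub, zero_add]
    exact Icc_subset_Icc (neg_le_neg (le_max_left r 0)) (le_max_left r 0)
  have hθ0 : ∀ x : ℝ, m < |x| → θ x = 0 ∧ deriv θ x = 0 := by
    intro x hx
    have hxt : x ∉ tsupport θ := fun h =>
      absurd (abs_le.2 (mem_Icc.1 (hsupp h))) (not_le.2 hx)
    exact ⟨image_eq_zero_of_notMem_tsupport hxt,
      by_contra fun h => hxt (support_deriv_subset (by simpa using h))⟩
  have hf0 : ∀ x : ℝ, x ∉ Icc (-R) R → f x = 0 := by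
    intro x hx
    have hx' : m < |x| := by
      rw [mem_Icc, not_and_or, not_le, not_le] at hx
      rcases hx with h | h
      · rw [lt_abs]; right; rw [hRdef] at h; linarith
      · rw [lt_abs]; left; rw [hRdef] at h; linarith
    obtain ⟨h1, h2⟩ := hθ0 x hx'
    simp [hf, h1, h2]
  have hgR : g R = 0 := by
    have := (hθ0 R (by rw [abs_of_nonneg hR0, hRdef]; linarith)).1
    simp [hg, this]
  have hgR' : g (-R) = 0 := by
    have := (hθ0 (-R) (by rw [abs_neg, abs_of_nonneg hR0, hRdef]; linarith)).1
    simp [hg, this]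
  have hfI : Integrable f := by
    refine (integrableOn_iff_integrable_of_support_subset (fun x hx => ?_)).mp
      ((intervalIntegrable_iff_integrableOn_Icc_of_le (by linarith : -R ≤ R)).1 (hfint (-R) R))
    by_contra hc; exact hx (hf0 x hc)
  have hfzero : ∫ x, f x = 0 := by
    rw [← setIntegral_eq_integral_of_forall_compl_eq_zero hf0,
      integral_Icc_eq_integral_Ioc, ← intervalIntegral.integral_of_le (by linarith : -R ≤ R),
      hftc _ _ (by linarith) hR0, hgR, hgR', sub_zero]
  -- decomposition
  have hdecomp : ∀ (s : ℝ) (h : ℝ → ℝ), Integrable h →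
      (∀ a c : ℝ, IntervalIntegrable h volume a c) →
      ∫ x, (if |x| < s ^ 2 then C₂ else C₁) * h x
        = C₁ * (∫ x, h x) + (C₂ - C₁) * ∫ x in (-(s^2))..(s^2), h x := by
    intro s h hI hII
    have hle : -(s^2) ≤ s^2 := by nlinarith [sq_nonneg s]
    have hIoo : IntegrableOn (fun x => (C₂ - C₁) * h x) (Ioo (-(s^2)) (s^2)) volume :=
      (((intervalIntegrable_iff_integrableOn_Ioc_of_le hle).1
        ((hII _ _).const_mul (C₂ - C₁))).mono_set Ioo_subset_Ioc_self)
    have e : ∀ x : ℝ, (if |x| < s ^ 2 then C₂ else C₁) * h x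
        = C₁ * h x + Set.indicator (Ioo (-(s^2)) (s^2)) (fun x => (C₂ - C₁) * h x) x := by
      intro x
      by_cases hx : |x| < s ^ 2
      · rw [if_pos hx, Set.indicator_of_mem (by rw [mem_Ioo, ← abs_lt]; exact hx)]; ring
      · rw [if_neg hx, Set.indicator_of_notMem (by rw [mem_Ioo, ← abs_lt]; exact hx), add_zero]
    simp_rw [e]
    rw [integral_add (hI.const_mul C₁)
        ((integrable_indicator_iff measurableSet_Ioo).2 hIoo),
      intMul, integral_indicator measurableSet_Ioo,
      ← integral_Ioc_eq_integral_Ioo, ← intervalIntegral.integral_of_le hle,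
      intIntMul]
  have hθI : Integrable θ := hθcont.integrable_of_hasCompactSupport hθc
  have inner : ∀ s : ℝ, (∫ x, (if |x| < s ^ 2 then C₂ else C₁) * f x)
      = (C₂ - C₁) * (g (s^2) - g (-(s^2))) := by
    intro s
    rw [hdecomp s f hfI hfint,
      hftc _ _ (neg_nonpos.2 (sq_nonneg s)) (sq_nonneg s)]
    show C₁ * (∫ (x:ℝ), f x) + (C₂ - C₁) * (g (s^2) - g (-(s^2)))
      = (C₂ - C₁) * (g (s^2) - g (-(s^2)))
    rw [hfzero, mul_zero, zero_add]
  -- FTC in time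
  set Θ : ℝ → ℝ := fun y => ∫ u in (0:ℝ)..y, θ u with hΘdef
  have hΘd : ∀ y : ℝ, HasDerivAt Θ (θ y) y := fun y =>
    intervalIntegral.integral_hasDerivAt_right (hθcont.intervalIntegrable 0 y)
      (hθcont.stronglyMeasurableAtFilter volume (nhds y)) hθcont.continuousAt
  have hbsq : ∀ s : ℝ, 0 ≤ s → g (s^2) - g (-(s^2)) = 2*s*θ (s^2) + 2*s*θ (-(s^2)) := by
    intro s hs
    have h1 : b (s^2) = 2*s := by
      rw [hb, bEq]
      simp only
      rw [Real.sqrt_sq hs, Real.sqrt_eq_zero_of_nonpos (neg_nonpos.2 (sq_nonneg s))]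
      ring
    have h2 : b (-(s^2)) = -(2*s) := by
      rw [hb, bEq]
      simp only
      rw [neg_neg, Real.sqrt_sq hs, Real.sqrt_eq_zero_of_nonpos (neg_nonpos.2 (sq_nonneg s))]
      ring
    simp only [hg]
    rw [h1, h2]; ring
  have hFd : ∀ s ∈ uIcc (0:ℝ) t,
      HasDerivAt (fun s : ℝ => (C₂ - C₁) * (Θ (s^2) - Θ (-(s^2))))
        ((C₂ - C₁) * (g (s^2) - g (-(s^2)))) s := by
    intro s hs
    rw [uIcc_of_le ht] at hs
    have hsq : HasDerivAt (fun s : ℝ => s^2) (2*s) s := by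
      simpa [mul_comm] using hasDerivAt_pow 2 s
    have h2 : HasDerivAt (fun s : ℝ => Θ (s^2)) (θ (s^2) * (2*s)) s := (hΘd _).comp s hsq
    have h3 : HasDerivAt (fun s : ℝ => Θ (-(s^2))) (θ (-(s^2)) * (-(2*s))) s :=
      (hΘd _).comp s hsq.neg
    have h4 := (h2.sub h3).const_mul (C₂ - C₁)
    refine h4.congr_deriv (Eq.symm ?_)
    rw [hbsq s hs.1]; ring
  have hcontint : IntervalIntegrable (fun s : ℝ => (C₂ - C₁) * (g (s^2) - g (-(s^2))))
      volume 0 t := by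
    apply Continuous.intervalIntegrable
    fun_prop
  have hstep : (∫ s in (0:ℝ)..t, ∫ x, (if |x| < s ^ 2 then C₂ else C₁) * f x)
      = (C₂ - C₁) * (Θ (t^2) - Θ (-(t^2))) := by
    rw [intervalIntegral.integral_congr (fun s _ => inner s),
      intervalIntegral.integral_eq_sub_of_hasDerivAt hFd hcontint]
    norm_num [hΘdef]
  have hΘt : Θ (t^2) - Θ (-(t^2)) = ∫ x in (-(t^2))..(t^2), θ x := by
    have hadd : (∫ u in (-(t^2))..(0:ℝ), θ u) + (∫ u in (0:ℝ)..(t^2), θ u)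
        = ∫ u in (-(t^2))..(t^2), θ u :=
      intervalIntegral.integral_add_adjacent_intervals
        (hθcont.intervalIntegrable _ _) (hθcont.intervalIntegrable _ _)
    have hsymm : (∫ u in (0:ℝ)..(-(t^2)), θ u) = -∫ u in (-(t^2))..(0:ℝ), θ u :=
      intervalIntegral.integral_symm _ _
    simp only [hΘdef]
    rw [hsymm]
    linarith
  rw [hdecomp t θ hθI hθcont.intervalIntegrable, hstep, hΘt, intMul]

/-- Non-uniqueness for the deterministic transport equation with
`b(x) = 2 sign(x) √|x|` (`b'(x) = 1/√|x| ∈ L¹_loc`): the constant `u₁ ≡ C₁` and the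
function `u₂` equal to `C₂` inside the parabola `{|x| < t²}` and `C₁` outside are two
distinct weak `L∞`-solutions with the same initial datum `u₀ ≡ C₁`. -/
theorem stmt17 (T C₁ C₂ : ℝ) (hT : 0 < T) (hC : C₁ ≠ C₂) :
    IsWeakTransportSol T (fun x => 2 * Real.sign x * Real.sqrt (abs x))
      (fun x => if x = 0 then 0 else 1 / Real.sqrt (abs x))
      (fun _ _ => C₁) (fun _ => C₁) ∧
    IsWeakTransportSol T (fun x => 2 * Real.sign x * Real.sqrt (abs x))
      (fun x => if x = 0 then 0 else 1 / Real.sqrt (abs x))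
      (fun t x => if |x| < t ^ 2 then C₂ else C₁) (fun _ => C₁) ∧
    (fun (_ : ℝ) (_ : ℝ) => C₁) ≠ (fun t x => if |x| < t ^ 2 then C₂ else C₁) := by
  refine ⟨⟨⟨|C₁|, fun _ _ => le_rfl⟩, ?_⟩,
    ⟨⟨max |C₁| |C₂|, fun t x => ?_⟩, ?_⟩, ?_⟩
  · intro θ hθ hθc t ht
    have h := key C₁ C₁ θ hθ hθc ht.1
    simp only [ite_self] at h
    exact h
  · dsimp only
    split_ifs
    · exact le_max_right _ _
    · exact le_max_left _ _
  · intro θ hθ hθc t ht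
    exact key C₁ C₂ θ hθ hθc ht.1
  · intro h
    have h2 := congrFun (congrFun h 1) 0
    simp only [abs_zero, one_pow, zero_lt_one, if_true] at h2
    exact hC h2
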